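/- Let K₁ = {(e^{2πiθ}, w) ∈ 𝕋 × closed unit disc : |w| = θ, θ ∈ [0,1]} ⊂ ℂ². Then K₁ is compact and connected, and the closed bidisc slice (closed unit disc) × {0} is contained in the polynomially convex hull of K₁. -/

import Mathlib

open Complex MeasureTheory Metric Set Filter Topology

/-- The polynomially convex hull of a set `K ⊆ ℂ²`: all points `z` such that every bound
`|P| ≤ C` valid on `K` for a polynomial `P ∈ ℂ[z₁,z₂]` also holds at `z`. -/
def polyHull2 (K : Set (ℂ × ℂ)) : Set (ℂ × ℂ) :=
  {z | ∀ P : MvPolynomial (Fin 2) ℂ, ∀ C : ℝ,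
    (∀ w ∈ K, ‖MvPolynomial.eval ![w.1, w.2] P‖ ≤ C) → ‖MvPolynomial.eval ![z.1, z.2] P‖ ≤ C}

/-- The set `K₁ = {(e^{2πiθ}, w) ∈ 𝕋 × 𝔻̄ : |w| = θ, θ ∈ [0,1]}`. -/
def Kone : Set (ℂ × ℂ) :=
  {p | ∃ θ ∈ Set.Icc (0 : ℝ) 1,
    p.1 = Complex.exp (2 * Real.pi * θ * Complex.I) ∧ ‖p.2‖ = θ}

lemma diff_eval2 {f g : ℂ → ℂ} (hf : Differentiable ℂ f) (hg : Differentiable ℂ g)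
    (P : MvPolynomial (Fin 2) ℂ) :
    Differentiable ℂ (fun z => MvPolynomial.eval ![f z, g z] P) := by
  induction P using MvPolynomial.induction_on with
  | C c => simp only [MvPolynomial.eval_C]; exact differentiable_const c
  | add p q hp hq => simp only [MvPolynomial.eval_add]; exact hp.add hq
  | mul_X p n hp =>
    simp only [MvPolynomial.eval_mul, MvPolynomial.eval_X]
    refine hp.mul ?_
    fin_cases n <;> simpa

lemma Kone_eq : Kone = (fun p : ℝ × ℂ =>
    (Complex.exp (2 * Real.pi * p.1 * Complex.I), p.1 • p.2)) ''
      (Set.Icc (0 : ℝ) 1 ×ˢ sphere (0 : ℂ) 1) := by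
  ext p
  constructor
  · rintro ⟨θ, hθ, h1, h2⟩
    rcases eq_or_ne θ 0 with rfl | hne
    · refine ⟨(0, 1), ⟨by simp, by simp⟩, ?_⟩
      have hp2 : p.2 = 0 := norm_eq_zero.mp h2
      refine Prod.ext ?_ ?_
      · simpa using h1.symm
      · simpa using hp2.symm
    · have hθpos : 0 < θ := lt_of_le_of_ne hθ.1 (Ne.symm hne)
      refine ⟨(θ, θ⁻¹ • p.2), ⟨hθ, ?_⟩, ?_⟩
      · simp only [mem_sphere_iff_norm, sub_zero, norm_smul, norm_inv,
          Real.norm_eq_abs, h2, _root_.abs_of_pos hθpos]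
        exact inv_mul_cancel₀ hne
      · refine Prod.ext h1.symm ?_
        show θ • (θ⁻¹ • p.2) = p.2
        rw [smul_smul, mul_inv_cancel₀ hne, one_smul]
  · rintro ⟨⟨θ, u⟩, ⟨hθ, hu⟩, h⟩
    subst h
    refine ⟨θ, hθ, rfl, ?_⟩
    simp only [mem_sphere_iff_norm, sub_zero] at hu
    have hθ0 : (0:ℝ) ≤ θ := hθ.1
    show ‖θ • u‖ = θ
    rw [norm_smul, Real.norm_eq_abs, hu, mul_one,
      _root_.abs_of_nonneg hθ0]

/-- `K₁` is compact and connected, and `𝔻̄ × {0}` is contained in its polynomially convex hull. -/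
theorem stmt_4 :
    IsCompact Kone ∧ IsConnected Kone ∧
      (closedBall (0 : ℂ) 1 ×ˢ ({0} : Set ℂ)) ⊆ polyHull2 Kone := by
  have hcont : Continuous (fun p : ℝ × ℂ =>
      (Complex.exp (2 * Real.pi * p.1 * Complex.I), p.1 • p.2)) := by
    refine Continuous.prodMk (Complex.continuous_exp.comp ?_) ?_
    · exact (continuous_const.mul (Complex.continuous_ofReal.comp continuous_fst)).mul
        continuous_const
    · exact continuous_fst.smul continuous_snd
  refine ⟨?_, ?_, ?_⟩
  · rw [Kone_eq]
    exact ((isCompact_Icc.prod (isCompact_sphere _ _)).image hcont)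
  · rw [Kone_eq]
    refine IsConnected.image ?_ _ hcont.continuousOn
    refine IsConnected.prod (isConnected_Icc zero_le_one) ?_
    refine isConnected_sphere ?_ 0 zero_le_one
    rw [Complex.rank_real_complex]
    norm_num
  · rintro ⟨z, w⟩ ⟨hz, hw⟩
    simp only [Set.mem_singleton_iff] at hw
    subst hw
    intro P C hC
    -- Step 1: bound on the circle {|ζ| = 1} × {0}
    have step1 : ∀ θ ∈ Set.Ioc (0:ℝ) 1,
        ‖MvPolynomial.eval ![Complex.exp (2 * Real.pi * θ * Complex.I), 0] P‖ ≤ C := by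
      intro θ hθ
      have hθne : (θ:ℝ) ≠ 0 := hθ.1.ne'
      set g : ℂ → ℂ :=
        fun v => MvPolynomial.eval ![Complex.exp (2 * Real.pi * θ * Complex.I), v] P with hg
      have hdiff : DiffContOnCl ℂ g (ball (0:ℂ) θ) :=
        (diff_eval2 (differentiable_const _) differentiable_id P).diffContOnCl
      have hfr : ∀ v ∈ frontier (ball (0:ℂ) θ), ‖g v‖ ≤ C := by
        intro v hv
        rw [frontier_ball 0 hθne] at hv
        simp only [mem_sphere_iff_norm, sub_zero] at hv
        exact hC (Complex.exp (2 * Real.pi * θ * Complex.I), v) ⟨θ, ⟨hθ.1.le, hθ.2⟩, rfl, hv⟩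
      have h0 : (0:ℂ) ∈ closure (ball (0:ℂ) θ) := by
        rw [closure_ball 0 hθne]; simp [hθ.1.le]
      exact Complex.norm_le_of_forall_mem_frontier_norm_le isBounded_ball hdiff hfr h0
    have step2 : ∀ ζ : ℂ, ‖ζ‖ = 1 →
        ‖MvPolynomial.eval ![ζ, 0] P‖ ≤ C := by
      intro ζ hζ
      have hπ := Real.pi_pos
      have harg := Complex.norm_mul_exp_arg_mul_I ζ
      rw [hζ, Complex.ofReal_one, one_mul] at harg
      have hargle := Complex.arg_le_pi ζ
      have harggt := Complex.neg_pi_lt_arg ζ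
      rcases lt_or_ge 0 (Complex.arg ζ) with hpos | hnp
      · have hθ : Complex.arg ζ / (2 * Real.pi) ∈ Set.Ioc (0:ℝ) 1 := by
          constructor
          · positivity
          · rw [div_le_one (by positivity)]
            nlinarith
        have := step1 _ hθ
        have heq : Complex.exp (2 * Real.pi * (Complex.arg ζ / (2 * Real.pi) : ℝ) * Complex.I)
            = ζ := by
          have h2π : ((2 * Real.pi : ℝ) : ℂ) ≠ 0 := by
            exact_mod_cast (by positivity : (2 * Real.pi : ℝ) ≠ 0)
          calc Complex.exp (2 * Real.pi * (Complex.arg ζ / (2 * Real.pi) : ℝ) * Complex.I)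
              = Complex.exp ((Complex.arg ζ : ℂ) * Complex.I) := by
                congr 1
                push_cast at h2π ⊢
                field_simp
            _ = ζ := harg
        rwa [heq] at this
      · have hθ : Complex.arg ζ / (2 * Real.pi) + 1 ∈ Set.Ioc (0:ℝ) 1 := by
          constructor
          · have : -1 < Complex.arg ζ / (2 * Real.pi) := by
              rw [lt_div_iff₀ (by positivity)]
              nlinarith
            linarith
          · have : Complex.arg ζ / (2 * Real.pi) ≤ 0 :=
              div_nonpos_of_nonpos_of_nonneg hnp (by positivity)
            linarith
        have := step1 _ hθ
        have heq : Complex.exp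
            (2 * Real.pi * ((Complex.arg ζ / (2 * Real.pi) + 1 : ℝ)) * Complex.I) = ζ := by
          have h2 : (2 * (Real.pi:ℂ)) ≠ 0 := by simp [Real.pi_ne_zero]
          calc Complex.exp (2 * Real.pi * ((Complex.arg ζ / (2 * Real.pi) + 1 : ℝ)) * Complex.I)
              = Complex.exp ((Complex.arg ζ : ℂ) * Complex.I + 2 * Real.pi * Complex.I) := by
                congr 1
                push_cast
                field_simp
            _ = Complex.exp ((Complex.arg ζ : ℂ) * Complex.I) *
                  Complex.exp (2 * Real.pi * Complex.I) := Complex.exp_add _ _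
            _ = ζ := by rw [Complex.exp_two_pi_mul_I, mul_one, harg]
        rwa [heq] at this
    -- Step 2: maximum principle on the unit disc
    set h : ℂ → ℂ := fun v => MvPolynomial.eval ![v, 0] P with hh
    have hdiff : DiffContOnCl ℂ h (ball (0:ℂ) 1) :=
      (diff_eval2 differentiable_id (differentiable_const _) P).diffContOnCl
    have hfr : ∀ v ∈ frontier (ball (0:ℂ) 1), ‖h v‖ ≤ C := by
      intro v hv
      rw [frontier_ball 0 one_ne_zero] at hv
      simp only [mem_sphere_iff_norm, sub_zero] at hv
      exact step2 v hv
    have hcl : z ∈ closure (ball (0:ℂ) 1) := by rwa [closure_ball 0 one_ne_zero]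
    exact Complex.norm_le_of_forall_mem_frontier_norm_le isBounded_ball hdiff hfr hcl
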